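/- arXiv:2101.04043 — 4 statements merged into one kernel-verified Lean document; each statement's English description precedes it below -/
import Mathlib

section
/- Let μ be a probability measure on ℝ^d with support D, and let V be an N-dimensional subspace of L²_μ(D) with orthonormal basis v_1, …, v_N such that K(x,x) := Σ_{i=1}^N |v_i(x)|² is finite and positive on D. Define the Christoffel function λ(x) = N / K(x,x), the induced probability measure dμ_V(x) = λ(x)^{-1} dμ(x) = (1/N) K(x,x) dμ(x), and the weighted space W = { √λ · v : v ∈ V }. Then the functions w_i = √λ · v_i form an L²_{μ_V}-orthonormal basis for W, sup_{x∈D} Σ_{i=1}^N |w_i(x)|² = N, and for every w ∈ W one has ‖w‖²_{2,μ_V} ≤ ‖w‖²_∞ ≤ N · ‖w‖²_{2,μ_V}. -/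
open MeasureTheory
open scoped BigOperators ENNReal

/-!
On the support of `μ` the density `K(x,x)/N` of `μ_V` is exactly `λ⁻¹`, so
`∫ λ f dμ_V = ∫ f dμ`: multiplying by `λ` undoes the change of measure. Hence the `w i`
inherit orthonormality from the `v i` and `‖∑ cᵢ wᵢ‖²_{2,μ_V} = ∑ cᵢ²`. Pointwise,
`∑ wᵢ(x)² = λ(x) K(x,x) = N`, so Cauchy–Schwarz gives `|∑ cᵢ wᵢ(x)|² ≤ N ∑ cᵢ²`; the lower
bound holds because `μ_V` is a probability measure carried by the support.
-/

section RealBiSup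

variable {α : Type*} {D : Set α} {f : α → ℝ} {B : ℝ}

lemma Real.biSup_le (h : ∀ x ∈ D, f x ≤ B) (hB : 0 ≤ B) : ⨆ x ∈ D, f x ≤ B :=
  Real.iSup_le (fun x => Real.iSup_le (h x) hB) hB

lemma Real.le_biSup (h : ∀ y ∈ D, f y ≤ B) {x : α} (hx : x ∈ D) : f x ≤ ⨆ y ∈ D, f y := by
  refine le_ciSup₂ (f := fun y (_ : y ∈ D) => f y) ⟨B, ?_⟩ x hx
  simp only [mem_upperBounds, Set.mem_iUnion, Set.mem_range]
  rintro _ ⟨y, hy, rfl⟩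
  exact h y hy

lemma integral_sq_le_biSup_abs_sq [MeasurableSpace α] {ν : Measure α} [IsProbabilityMeasure ν]
    (hD : ∀ᵐ x ∂ν, x ∈ D) (hB : ∀ x ∈ D, |f x| ≤ B) :
    ∫ x, f x ^ 2 ∂ν ≤ (⨆ x ∈ D, |f x|) ^ 2 := by
  calc ∫ x, f x ^ 2 ∂ν ≤ ∫ _, (⨆ x ∈ D, |f x|) ^ 2 ∂ν := by
        refine integral_mono_of_nonneg (ae_of_all _ fun x => sq_nonneg _) (integrable_const _) ?_
        filter_upwards [hD] with x hx
        rw [← sq_abs]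
        exact pow_le_pow_left₀ (abs_nonneg _) (Real.le_biSup hB hx) 2
    _ = (⨆ x ∈ D, |f x|) ^ 2 := by simp

end RealBiSup

section Orthonormal

variable {α ι : Type*} [MeasurableSpace α] {μ : Measure α} [Fintype ι] [DecidableEq ι]
  {v : ι → α → ℝ}

lemma integral_sum_mul_sq_of_orthonormal (hL2 : ∀ i, MemLp (v i) 2 μ)
    (horth : ∀ i j, ∫ x, v i x * v j x ∂μ = if i = j then 1 else 0) (c : ι → ℝ) :
    ∫ x, (∑ i, c i * v i x) ^ 2 ∂μ = ∑ i, c i ^ 2 := by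
  have hint : ∀ i j, Integrable (fun x => c i * c j * (v i x * v j x)) μ :=
    fun i j => ((hL2 i).integrable_mul (hL2 j)).const_mul _
  have hexp : ∀ x, (∑ i, c i * v i x) ^ 2 = ∑ i, ∑ j, c i * c j * (v i x * v j x) := by
    intro x
    rw [sq, Finset.sum_mul_sum]
    exact Finset.sum_congr rfl fun i _ => Finset.sum_congr rfl fun j _ => by ring
  simp_rw [hexp]
  rw [integral_finsetSum _ fun i _ => integrable_finsetSum _ fun j _ => hint i j]
  refine Finset.sum_congr rfl fun i _ => ?_
  rw [integral_finsetSum _ fun j _ => hint i j]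
  simp [integral_const_mul, horth, sq]

lemma integral_sum_sq_of_orthonormal (hL2 : ∀ i, MemLp (v i) 2 μ)
    (horth : ∀ i j, ∫ x, v i x * v j x ∂μ = if i = j then 1 else 0) :
    ∫ x, ∑ i, v i x ^ 2 ∂μ = Fintype.card ι := by
  rw [integral_finsetSum _ fun i _ => (hL2 i).integrable_sq]
  simp [sq, horth]

end Orthonormal

noncomputable section Christoffel

variable {α ι : Type*} [Fintype ι]

/-- `K(x,x)`, the diagonal of the reproducing kernel of `span v`. -/
def kernelDiag (v : ι → α → ℝ) (x : α) : ℝ := ∑ i, v i x ^ 2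

def christoffelFunction (v : ι → α → ℝ) (x : α) : ℝ := Fintype.card ι / kernelDiag v x

/-- The `V`-induced measure `μ_V = λ⁻¹ μ`. -/
def christoffelMeasure [MeasurableSpace α] (μ : Measure α) (v : ι → α → ℝ) : Measure α :=
  μ.withDensity fun x => ENNReal.ofReal (kernelDiag v x / Fintype.card ι)

def weightedBasis (v : ι → α → ℝ) (i : ι) (x : α) : ℝ := √(christoffelFunction v x) * v i x

variable {v : ι → α → ℝ} {x : α}

lemma kernelDiag_nonneg (v : ι → α → ℝ) (x : α) : 0 ≤ kernelDiag v x :=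
  Finset.sum_nonneg fun _ _ => sq_nonneg _

lemma christoffelFunction_nonneg (v : ι → α → ℝ) (x : α) : 0 ≤ christoffelFunction v x :=
  div_nonneg (Nat.cast_nonneg _) (kernelDiag_nonneg v x)

lemma nonempty_of_kernelDiag_pos (hx : 0 < kernelDiag v x) : Nonempty ι := by
  by_contra h
  simp [kernelDiag, not_nonempty_iff.mp h] at hx

lemma kernelDiag_div_card_mul_christoffelFunction (hx : 0 < kernelDiag v x) :
    kernelDiag v x / Fintype.card ι * christoffelFunction v x = 1 := by
  have := nonempty_of_kernelDiag_pos hx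
  have : (0 : ℝ) < Fintype.card ι := Nat.cast_pos.mpr Fintype.card_pos
  rw [christoffelFunction]
  field_simp

lemma weightedBasis_mul_weightedBasis (i j : ι) :
    weightedBasis v i x * weightedBasis v j x = christoffelFunction v x * (v i x * v j x) := by
  rw [weightedBasis, weightedBasis, mul_mul_mul_comm, Real.mul_self_sqrt
    (christoffelFunction_nonneg v x)]

lemma sum_mul_weightedBasis (c : ι → ℝ) :
    ∑ i, c i * weightedBasis v i x = √(christoffelFunction v x) * ∑ i, c i * v i x := by
  rw [Finset.mul_sum]
  exact Finset.sum_congr rfl fun i _ => by rw [weightedBasis]; ring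

lemma sum_weightedBasis_sq (hx : 0 < kernelDiag v x) :
    ∑ i, weightedBasis v i x ^ 2 = Fintype.card ι := by
  have := nonempty_of_kernelDiag_pos hx
  simp_rw [sq, weightedBasis_mul_weightedBasis, ← Finset.mul_sum, ← sq]
  rw [christoffelFunction, ← kernelDiag]
  field_simp

lemma sq_sum_mul_weightedBasis_le (hx : 0 < kernelDiag v x) (c : ι → ℝ) :
    (∑ i, c i * weightedBasis v i x) ^ 2 ≤ Fintype.card ι * ∑ i, c i ^ 2 := by
  calc (∑ i, c i * weightedBasis v i x) ^ 2
      ≤ (∑ i, c i ^ 2) * ∑ i, weightedBasis v i x ^ 2 := Finset.sum_mul_sq_le_sq_mul_sq _ _ _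
    _ = Fintype.card ι * ∑ i, c i ^ 2 := by rw [sum_weightedBasis_sq hx, mul_comm]

lemma biSup_sum_weightedBasis_sq {D : Set α} (hD : D.Nonempty)
    (hpos : ∀ x ∈ D, 0 < kernelDiag v x) :
    ⨆ x ∈ D, ∑ i, weightedBasis v i x ^ 2 = Fintype.card ι := by
  obtain ⟨x₀, hx₀⟩ := hD
  have hle : ∀ x ∈ D, ∑ i, weightedBasis v i x ^ 2 ≤ Fintype.card ι :=
    fun x hx => (sum_weightedBasis_sq (hpos x hx)).le
  refine le_antisymm (Real.biSup_le hle (Nat.cast_nonneg _)) ?_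
  calc (Fintype.card ι : ℝ) = ∑ i, weightedBasis v i x₀ ^ 2 :=
        (sum_weightedBasis_sq (hpos x₀ hx₀)).symm
    _ ≤ ⨆ x ∈ D, ∑ i, weightedBasis v i x ^ 2 := Real.le_biSup hle hx₀

lemma abs_sum_mul_weightedBasis_le (hx : 0 < kernelDiag v x) (c : ι → ℝ) :
    |∑ i, c i * weightedBasis v i x| ≤ √(Fintype.card ι * ∑ i, c i ^ 2) :=
  Real.abs_le_sqrt (sq_sum_mul_weightedBasis_le hx c)

lemma biSup_abs_sum_mul_weightedBasis_sq_le {D : Set α} (hpos : ∀ x ∈ D, 0 < kernelDiag v x)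
    (c : ι → ℝ) :
    (⨆ x ∈ D, |∑ i, c i * weightedBasis v i x|) ^ 2 ≤ Fintype.card ι * ∑ i, c i ^ 2 := by
  have hsup := Real.biSup_le (fun x hx => abs_sum_mul_weightedBasis_le (hpos x hx) c)
    (Real.sqrt_nonneg _)
  have hnonneg : 0 ≤ ⨆ x ∈ D, |∑ i, c i * weightedBasis v i x| :=
    Real.iSup_nonneg fun _ => Real.iSup_nonneg fun _ => abs_nonneg _
  exact (Real.le_sqrt hnonneg (by positivity)).mp hsup

variable [MeasurableSpace α] {μ : Measure α}

lemma integral_christoffelMeasure (hv : ∀ i, AEStronglyMeasurable (v i) μ) (g : α → ℝ) :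
    ∫ x, g x ∂christoffelMeasure μ v = ∫ x, kernelDiag v x / Fintype.card ι * g x ∂μ := by
  have hK : AEMeasurable (fun x => kernelDiag v x / Fintype.card ι) μ :=
    (Finset.aemeasurable_fun_sum _ fun i _ => (hv i).aemeasurable.pow_const 2).div_const _
  rw [christoffelMeasure, integral_withDensity_eq_integral_toReal_smul₀ hK.ennreal_ofReal
    (ae_of_all _ fun _ => ENNReal.ofReal_lt_top)]
  refine integral_congr_ae (ae_of_all _ fun x => ?_)
  simp only [smul_eq_mul, ENNReal.toReal_ofReal
    (div_nonneg (kernelDiag_nonneg v x) (Nat.cast_nonneg _))]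

lemma integral_christoffelFunction_mul (hv : ∀ i, AEStronglyMeasurable (v i) μ)
    (hpos : ∀ᵐ x ∂μ, 0 < kernelDiag v x) (f : α → ℝ) :
    ∫ x, christoffelFunction v x * f x ∂christoffelMeasure μ v = ∫ x, f x ∂μ := by
  rw [integral_christoffelMeasure hv]
  refine integral_congr_ae ?_
  filter_upwards [hpos] with x hx
  rw [← mul_assoc, kernelDiag_div_card_mul_christoffelFunction hx, one_mul]

variable [DecidableEq ι]

lemma isProbabilityMeasure_christoffelMeasure [Nonempty ι] (hL2 : ∀ i, MemLp (v i) 2 μ)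
    (horth : ∀ i j, ∫ x, v i x * v j x ∂μ = if i = j then 1 else 0) :
    IsProbabilityMeasure (christoffelMeasure μ v) := by
  have hK : ∫ x, kernelDiag v x ∂μ = Fintype.card ι := integral_sum_sq_of_orthonormal hL2 horth
  have hint : Integrable (fun x => kernelDiag v x / Fintype.card ι) μ :=
    (integrable_finsetSum _ fun i _ => (hL2 i).integrable_sq).div_const _
  constructor
  rw [christoffelMeasure, withDensity_apply _ MeasurableSet.univ, Measure.restrict_univ,
    ← ofReal_integral_eq_lintegral_ofReal hint
      (ae_of_all _ fun x => div_nonneg (kernelDiag_nonneg v x) (Nat.cast_nonneg _)),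
    integral_div, hK,
    div_self (Nat.cast_ne_zero.mpr Fintype.card_ne_zero), ENNReal.ofReal_one]

lemma integral_weightedBasis_mul_weightedBasis (hL2 : ∀ i, MemLp (v i) 2 μ)
    (hpos : ∀ᵐ x ∂μ, 0 < kernelDiag v x)
    (horth : ∀ i j, ∫ x, v i x * v j x ∂μ = if i = j then 1 else 0) (i j : ι) :
    ∫ x, weightedBasis v i x * weightedBasis v j x ∂christoffelMeasure μ v =
      if i = j then 1 else 0 := by
  simp_rw [weightedBasis_mul_weightedBasis]
  rw [integral_christoffelFunction_mul (fun i => (hL2 i).1) hpos, horth]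

lemma integral_sum_mul_weightedBasis_sq (hL2 : ∀ i, MemLp (v i) 2 μ)
    (hpos : ∀ᵐ x ∂μ, 0 < kernelDiag v x)
    (horth : ∀ i j, ∫ x, v i x * v j x ∂μ = if i = j then 1 else 0) (c : ι → ℝ) :
    ∫ x, (∑ i, c i * weightedBasis v i x) ^ 2 ∂christoffelMeasure μ v = ∑ i, c i ^ 2 := by
  simp_rw [sum_mul_weightedBasis, mul_pow, Real.sq_sqrt (christoffelFunction_nonneg v _)]
  rw [integral_christoffelFunction_mul (fun i => (hL2 i).1) hpos,
    integral_sum_mul_sq_of_orthonormal hL2 horth]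

end Christoffel

theorem stmt2_general {d N : ℕ} (μ : Measure (EuclideanSpace ℝ (Fin d)))
    [IsProbabilityMeasure μ]
    (D : Set (EuclideanSpace ℝ (Fin d))) (hDsupp : μ Dᶜ = 0)
    (v : Fin N → EuclideanSpace ℝ (Fin d) → ℝ)
    (hL2 : ∀ i, MemLp (v i) 2 μ)
    (horth : ∀ i j, ∫ x, v i x * v j x ∂μ = if i = j then 1 else 0)
    (Kx lam : EuclideanSpace ℝ (Fin d) → ℝ)
    (hKx : Kx = fun x => ∑ i, (v i x) ^ 2)
    (hKpos : ∀ x ∈ D, 0 < Kx x)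
    (hlam : lam = fun x => (N : ℝ) / Kx x)
    (μV : Measure (EuclideanSpace ℝ (Fin d)))
    (hμV : μV = μ.withDensity (fun x => ENNReal.ofReal (Kx x / N)))
    (w : Fin N → EuclideanSpace ℝ (Fin d) → ℝ)
    (hw : ∀ i, w i = fun x => Real.sqrt (lam x) * v i x) :
    (∀ i j, ∫ x, w i x * w j x ∂μV = if i = j then 1 else 0) ∧
    (⨆ x ∈ D, ∑ i, (w i x) ^ 2) = (N : ℝ) ∧
    (∀ c : Fin N → ℝ,
      (∫ x, (∑ i, c i * w i x) ^ 2 ∂μV) ≤ (⨆ x ∈ D, |∑ i, c i * w i x|) ^ 2 ∧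
      (⨆ x ∈ D, |∑ i, c i * w i x|) ^ 2 ≤ (N : ℝ) * ∫ x, (∑ i, c i * w i x) ^ 2 ∂μV) := by
  obtain rfl : Kx = kernelDiag v := hKx
  obtain rfl : lam = christoffelFunction v := by
    ext x
    simp [hlam, christoffelFunction]
  obtain rfl : μV = christoffelMeasure μ v := by simp [hμV, christoffelMeasure]
  obtain rfl : w = weightedBasis v := funext fun i => by rw [hw i]; rfl
  have hD : ∀ᵐ x ∂μ, x ∈ D := ae_iff.2 hDsupp
  have hDne : D.Nonempty := hD.exists
  have := nonempty_of_kernelDiag_pos (hKpos _ hDne.some_mem)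
  have := isProbabilityMeasure_christoffelMeasure hL2 horth
  have hpos_ae : ∀ᵐ x ∂μ, 0 < kernelDiag v x := hD.mono hKpos
  refine ⟨integral_weightedBasis_mul_weightedBasis hL2 hpos_ae horth,
    by simpa using biSup_sum_weightedBasis_sq hDne hKpos, fun c => ⟨?_, ?_⟩⟩
  · exact integral_sq_le_biSup_abs_sq (withDensity_absolutelyContinuous _ _ |>.ae_le hD)
      fun x hx => abs_sum_mul_weightedBasis_le (hKpos x hx) c
  · rw [integral_sum_mul_weightedBasis_sq hL2 hpos_ae horth c]
    simpa using biSup_abs_sum_mul_weightedBasis_sq_le hKpos c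

/-- With `μ` a probability measure supported on `D`, `V` an
`N`-dimensional subspace of `L²_μ(D)` with orthonormal basis `v i`, kernel diagonal
`K(x,x) = ∑ i, (v i x)²` finite and positive on `D`, Christoffel function
`λ(x) = N / K(x,x)`, induced measure `dμ_V = λ⁻¹ dμ = (K(x,x)/N) dμ`, and weighted
space `W = √λ · V`: the functions `w i = √λ · v i` form an `L²_{μ_V}`-orthonormal
basis of `W`, `sup_{x∈D} ∑ i, (w i x)² = N`, and every `w ∈ W` satisfies
`‖w‖²_{2,μ_V} ≤ ‖w‖²_∞ ≤ N ‖w‖²_{2,μ_V}`. -/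
theorem stmt2 {d N : ℕ} (μ : Measure (EuclideanSpace ℝ (Fin d)))
    [IsProbabilityMeasure μ]
    (D : Set (EuclideanSpace ℝ (Fin d))) (hDclosed : IsClosed D) (hDsupp : μ Dᶜ = 0)
    (v : Fin N → EuclideanSpace ℝ (Fin d) → ℝ)
    (hmeas : ∀ i, Measurable (v i))
    (hL2 : ∀ i, MemLp (v i) 2 μ)
    (horth : ∀ i j, ∫ x, v i x * v j x ∂μ = if i = j then 1 else 0)
    (Kx lam : EuclideanSpace ℝ (Fin d) → ℝ)
    (hKx : Kx = fun x => ∑ i, (v i x) ^ 2)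
    (hKpos : ∀ x ∈ D, 0 < Kx x)
    (hlam : lam = fun x => (N : ℝ) / Kx x)
    (μV : Measure (EuclideanSpace ℝ (Fin d)))
    (hμV : μV = μ.withDensity (fun x => ENNReal.ofReal (Kx x / N)))
    (w : Fin N → EuclideanSpace ℝ (Fin d) → ℝ)
    (hw : ∀ i, w i = fun x => Real.sqrt (lam x) * v i x) :
    (∀ i j, ∫ x, w i x * w j x ∂μV = if i = j then 1 else 0) ∧
    (⨆ x ∈ D, ∑ i, (w i x) ^ 2) = (N : ℝ) ∧
    (∀ c : Fin N → ℝ,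
      (∫ x, (∑ i, c i * w i x) ^ 2 ∂μV) ≤ (⨆ x ∈ D, |∑ i, c i * w i x|) ^ 2 ∧
      (⨆ x ∈ D, |∑ i, c i * w i x|) ^ 2 ≤ (N : ℝ) * ∫ x, (∑ i, c i * w i x) ^ 2 ∂μV) :=
  stmt2_general μ D hDsupp v hL2 horth Kx lam hKx hKpos hlam μV hμV w hw
end

section
/- Let V be an N-dimensional space of functions on D ⊆ ℝ^d with basis v_1, …, v_N, let μ and ρ be probability measures on D with ρ ≪ μ, and suppose every nonzero v ∈ V satisfies μ(v^{-1}(0)) = 0. Let X_1, …, X_N be independent random variables each distributed according to ρ, and let V̂ be the N×N random matrix with entries V̂_{i,j} = v_j(X_i). Then Pr[det V̂ = 0] = 0, i.e., V̂ is invertible almost surely. -/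
/-!
Write `f x = (v j x)ⱼ ∈ ℝᴺ`. Every proper subspace `W` lies in the kernel of a nonzero
functional `c`, and `f x ∈ ker c` says `∑ cᵢ vᵢ x = 0`; so `f ⁻¹' W` is `μ`-null, hence `ρ`-null.
Drawing the rows `f (X 0), f (X 1), …` one at a time, each new row almost surely avoids the span
of the previous ones, which is a proper subspace as long as fewer than `N` rows have been drawn.
Hence the `N` rows are almost surely linearly independent, i.e. the alternant matrix is
almost surely invertible.
-/

open MeasureTheory ProbabilityTheory Module

section LinearIndependent

variable {β E : Type*} [MeasurableSpace β] [NormedAddCommGroup E] [NormedSpace ℝ E]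
  [FiniteDimensional ℝ E] [MeasurableSpace E] [BorelSpace E]

lemma measurableSet_linearIndependent {ι : Type*} [Finite ι] {g : β → ι → E}
    (hg : Measurable g) : MeasurableSet {b | LinearIndependent ℝ (g b)} :=
  hg isOpen_setOfPred_linearIndependent.measurableSet

theorem ae_linearIndependent_comp {ρ : Measure β} [SigmaFinite ρ] {f : β → E}
    (hf : Measurable f) (hρ : ∀ W : Submodule ℝ E, W ≠ ⊤ → ρ (f ⁻¹' W) = 0) :
    ∀ k ≤ finrank ℝ E, ∀ᵐ y ∂(Measure.pi fun _ : Fin k => ρ), LinearIndependent ℝ (f ∘ y) := by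
  intro k hk
  induction k with
  | zero => exact .of_forall fun y => linearIndependent_empty_type
  | succ k ih =>
    set e := (MeasurableEquiv.piFinSuccAbove (fun _ => β) 0).symm
    have hmeas : MeasurableSet {p : β × (Fin k → β) | LinearIndependent ℝ (f ∘ e p)} :=
      measurableSet_linearIndependent <| measurable_pi_lambda _ fun i => hf.comp e.measurable.eval
    rw [← (measurePreserving_piFinSuccAbove (fun _ => ρ) 0).symm.map_eq,
      e.measurableEmbedding.ae_map_iff, Measure.ae_prod_iff_ae_ae hmeas, Measure.ae_ae_comm hmeas]
    filter_upwards [ih (by omega)] with y hy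
    have hspan : Submodule.span ℝ (Set.range (f ∘ y)) ≠ ⊤ := fun htop => by
      have := finrank_range_le_card (R := ℝ) (f ∘ y)
      rw [Set.finrank, htop, finrank_top, Fintype.card_fin] at this
      omega
    filter_upwards [measure_eq_zero_iff_ae_notMem.1 (hρ _ hspan)] with a ha
    have he : e (a, y) = Fin.cons a y := by simp [e, Fin.consEquiv]
    rwa [he, Fin.comp_cons, linearIndependent_finCons, and_iff_right hy]

end LinearIndependent

lemma measure_preimage_submodule_eq_zero {α : Type*} [MeasurableSpace α] (μ : Measure α)
    {N : ℕ} (v : Fin N → α → ℝ)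
    (hμ : ∀ c : Fin N → ℝ, c ≠ 0 → μ {x | ∑ i, c i * v i x = 0} = 0)
    {W : Submodule ℝ (Fin N → ℝ)} (hW : W ≠ ⊤) :
    μ ((fun x j => v j x) ⁻¹' W) = 0 := by
  classical
  obtain ⟨φ, hφ, hWφ⟩ := W.exists_le_ker_of_lt_top hW.lt_top
  set c : Fin N → ℝ := fun i => φ (Pi.single i 1)
  have hc : c ≠ 0 := fun h0 => hφ <| LinearMap.pi_ext' fun i => LinearMap.ext_ring <| congrFun h0 i
  refine measure_mono_null (fun x hx => ?_) (hμ c hc)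
  have hφx : φ (fun j => v j x) = 0 := hWφ hx
  rw [pi_eq_sum_univ' (fun j => v j x), map_sum] at hφx
  simpa [c, mul_comm] using hφx

theorem stmt4_general {d N : ℕ} {Ω : Type*} [MeasurableSpace Ω]
    (P : Measure Ω) [IsProbabilityMeasure P]
    (μ ρ : Measure (EuclideanSpace ℝ (Fin d)))
    [IsProbabilityMeasure ρ]
    (hac : ρ ≪ μ)
    (v : Fin N → EuclideanSpace ℝ (Fin d) → ℝ)
    (hmeas : ∀ i, Measurable (v i))
    (hμZC : ∀ c : Fin N → ℝ, c ≠ 0 → μ {x | ∑ i, c i * v i x = 0} = 0)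
    (X : Fin N → Ω → EuclideanSpace ℝ (Fin d))
    (hXmeas : ∀ i, Measurable (X i))
    (hXindep : iIndepFun X P)
    (hXdist : ∀ i, P.map (X i) = ρ) :
    P {ω | (Matrix.of fun i j : Fin N => v j (X i ω)).det = 0} = 0 := by
  have hlaw : P.map (fun ω i => X i ω) = Measure.pi fun _ => ρ := by
    rw [(iIndepFun_iff_map_fun_eq_pi_map fun i => (hXmeas i).aemeasurable).1 hXindep]
    simp_rw [hXdist]
  have hrows : ∀ᵐ y ∂(Measure.pi fun _ : Fin N => ρ),
      LinearIndependent ℝ ((fun x j => v j x) ∘ y) :=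
    ae_linearIndependent_comp (measurable_pi_lambda _ hmeas)
      (fun W hW => hac (measure_preimage_submodule_eq_zero μ v hμZC hW)) N (by simp)
  rw [← hlaw] at hrows
  have hdet : ∀ᵐ ω ∂P, (Matrix.of fun i j : Fin N => v j (X i ω)).det ≠ 0 := by
    filter_upwards [ae_of_ae_map (measurable_pi_lambda _ hXmeas).aemeasurable hrows] with ω hω
    exact ((Matrix.isUnit_iff_isUnit_det _).1 (Matrix.linearIndependent_rows_iff_isUnit.1 hω)).ne_zero
  simpa [ae_iff] using hdet

/-- Let `V` be an `N`-dimensional space of functions on `D ⊆ ℝ^d`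
spanned by `v 0, …, v (N-1)`, let `μ, ρ` be probability measures on `D` with `ρ ≪ μ`,
and suppose every nonzero element of `V` vanishes on a `μ`-null set only.  If
`X 0, …, X (N-1)` are i.i.d. samples from `ρ`, then the random alternant matrix
`(v j (X i))_{i,j}` is singular with probability zero. -/
theorem stmt4 {d N : ℕ} {Ω : Type*} [MeasurableSpace Ω]
    (P : Measure Ω) [IsProbabilityMeasure P]
    (D : Set (EuclideanSpace ℝ (Fin d)))
    (μ ρ : Measure (EuclideanSpace ℝ (Fin d)))
    [IsProbabilityMeasure μ] [IsProbabilityMeasure ρ]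
    (hμD : μ Dᶜ = 0) (hρD : ρ Dᶜ = 0) (hac : ρ ≪ μ)
    (v : Fin N → EuclideanSpace ℝ (Fin d) → ℝ)
    (hmeas : ∀ i, Measurable (v i))
    (hindep : LinearIndependent ℝ v)
    (hμZC : ∀ c : Fin N → ℝ, c ≠ 0 → μ {x | ∑ i, c i * v i x = 0} = 0)
    (X : Fin N → Ω → EuclideanSpace ℝ (Fin d))
    (hXmeas : ∀ i, Measurable (X i))
    (hXindep : iIndepFun X P)
    (hXdist : ∀ i, P.map (X i) = ρ) :
    P {ω | (Matrix.of fun i j : Fin N => v j (X i ω)).det = 0} = 0 :=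
  stmt4_general P μ ρ hac v hmeas hμZC X hXmeas hXindep hXdist
end

section
/- Let D ⊂ ℝ^d be a compact domain satisfying the weak uniform interior cone condition with radius parameter δ > 0 and angle parameter θ ∈ (0, π/2]: for every x ∈ D there exists a unit vector v_x ∈ ℝ^d such that (x + C(v_x)) ∩ B_δ(x) ⊆ D, where C(v_x) = {z : ⟨z, v_x⟩ > |z| cos θ}. Then for any 0 < r₀ < ∞ there exists a constant C > 0, depending only on D and r₀, such that vol(B_r(x) ∩ D) ≥ C · vol(B_r(x)) for all x ∈ D and all 0 < r ≤ r₀. -/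
open MeasureTheory Metric Real
open scoped BigOperators ENNReal RealInnerProductSpace

/-- (Lemma: the weak uniform interior cone condition implies the
measure density condition.)  Let `D ⊂ ℝ^d` be compact and suppose that for every
`x ∈ D` there is a unit vector `vx` whose cone `C(vx) = {z : ⟪z, vx⟫ > ‖z‖ cos θ}`
satisfies `(x + C(vx)) ∩ B_δ(x) ⊆ D`, where `δ > 0` and `θ ∈ (0, π/2]`.  Then for any
`0 < r₀ < ∞` there is a constant `C > 0`, depending only on `D` and `r₀`, with
`vol (B_r(x) ∩ D) ≥ C · vol (B_r(x))` for all `x ∈ D` and `0 < r ≤ r₀`. -/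
theorem stmt16 {d : ℕ} (D : Set (EuclideanSpace ℝ (Fin d)))
    (hDcompact : IsCompact D)
    (δ θ : ℝ) (hδ : 0 < δ) (hθ : θ ∈ Set.Ioc 0 (π / 2))
    (hcone : ∀ x ∈ D, ∃ vx : EuclideanSpace ℝ (Fin d), ‖vx‖ = 1 ∧
      ∀ z : EuclideanSpace ℝ (Fin d),
        ⟪z, vx⟫ > ‖z‖ * Real.cos θ → ‖z‖ ≤ δ → x + z ∈ D) :
    ∀ r₀ : ℝ, 0 < r₀ → ∃ C : ℝ, 0 < C ∧
      ∀ x ∈ D, ∀ r : ℝ, 0 < r → r ≤ r₀ →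
        ENNReal.ofReal C * volume (closedBall x r) ≤ volume (closedBall x r ∩ D) := by
  intro r₀ hr₀
  have hpi := Real.pi_pos
  set a : ℝ := Real.cos θ with ha
  have ha0 : 0 ≤ a := Real.cos_nonneg_of_mem_Icc ⟨by linarith [hθ.1], hθ.2⟩
  have ha1 : a < 1 := by
    have := Real.cos_lt_cos_of_nonneg_of_le_pi (le_refl 0) (by linarith [hθ.2]) hθ.1
    simpa using this
  set c : ℝ := (1 - a) / 8 with hc_def
  have hc : 0 < c := by rw [hc_def]; linarith
  have hc8 : c ≤ 1 / 8 := by simp only [hc_def]; linarith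
  set c₂ : ℝ := c * min 1 (δ / r₀) with hc₂_def
  have hc₂ : 0 < c₂ := mul_pos hc (lt_min one_pos (by positivity))
  set n := Module.finrank ℝ (EuclideanSpace ℝ (Fin d)) with hn
  refine ⟨c₂ ^ n, pow_pos hc₂ n, ?_⟩
  intro x hx r hr hrr₀
  obtain ⟨v, hv, hvD⟩ := hcone x hx
  set ρ : ℝ := min r δ with hρ_def
  have hρ : 0 < ρ := lt_min hr hδ
  set s : ℝ := c * ρ with hs_def
  have hs : 0 < s := mul_pos hc hρ
  set y : EuclideanSpace ℝ (Fin d) := x + (ρ / 2) • v with hy_def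
  have hsub : closedBall y s ⊆ closedBall x r ∩ D := by
    intro w hw
    rw [mem_closedBall, dist_eq_norm] at hw
    set z : EuclideanSpace ℝ (Fin d) := w - x with hz_def
    have hz1 : ‖z - (ρ / 2) • v‖ ≤ s := by
      have : z - (ρ / 2) • v = w - y := by simp [hz_def, hy_def]; abel
      rw [this]; exact hw
    have hznorm : ‖z‖ ≤ ρ / 2 + s := by
      have h1 : ‖z‖ ≤ ‖(ρ / 2) • v‖ + ‖z - (ρ / 2) • v‖ := by
        have := norm_add_le ((ρ / 2) • v) (z - (ρ / 2) • v)
        simpa using this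
      have h2 : ‖(ρ / 2) • v‖ = ρ / 2 := by
        rw [norm_smul, hv, mul_one, Real.norm_eq_abs, abs_of_nonneg (by linarith)]
      linarith
    have hzρ : ‖z‖ ≤ ρ := by
      have : s ≤ ρ / 2 := by
        rw [hs_def]; nlinarith
      linarith
    have hinner : ⟪z, v⟫ ≥ ρ / 2 - s := by
      have h1 : ⟪z, v⟫ = ⟪(ρ / 2) • v, v⟫ + ⟪z - (ρ / 2) • v, v⟫ := by
        rw [← inner_add_left]; congr 1; abel
      have h2 : ⟪(ρ / 2) • v, v⟫ = ρ / 2 := by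
        rw [real_inner_smul_left, real_inner_self_eq_norm_sq, hv]; ring
      have h3 : |⟪z - (ρ / 2) • v, v⟫| ≤ ‖z - (ρ / 2) • v‖ * ‖v‖ := abs_real_inner_le_norm _ _
      rw [hv, mul_one] at h3
      have h4 : ⟪z - (ρ / 2) • v, v⟫ ≥ -s := by
        have := (abs_le.1 h3).1
        linarith [hz1]
      linarith [h1, h2, h4]
    have hcone' : ⟪z, v⟫ > ‖z‖ * a := by
      have hstrict : ρ / 2 - s > (ρ / 2 + s) * a := by
        rw [hs_def, hc_def]; nlinarith [mul_pos hρ (sub_pos.2 ha1), mul_nonneg (mul_nonneg hρ.le (sub_pos.2 ha1).le) ha0]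
      have : ‖z‖ * a ≤ (ρ / 2 + s) * a := mul_le_mul_of_nonneg_right hznorm ha0
      linarith
    have hwD : w ∈ D := by
      have := hvD z hcone' (hzρ.trans (min_le_right r δ))
      simpa [hz_def] using this
    refine ⟨?_, hwD⟩
    rw [mem_closedBall, dist_eq_norm]
    exact hzρ.trans (min_le_left r δ)
  -- measure computation
  have hvol1 : volume (closedBall y s) = ENNReal.ofReal (s ^ n) * volume (ball (0 : EuclideanSpace ℝ (Fin d)) 1) :=
    Measure.addHaar_closedBall _ _ hs.le
  have hvol2 : volume (closedBall x r) = ENNReal.ofReal (r ^ n) * volume (ball (0 : EuclideanSpace ℝ (Fin d)) 1) :=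
    Measure.addHaar_closedBall _ _ hr.le
  have hc₂r : c₂ * r ≤ s := by
    rw [hc₂_def, hs_def, hρ_def]
    rcases min_le_iff.1 (le_refl (min r δ)) with _ | _
    · have hm : min 1 (δ / r₀) * r ≤ min r δ := by
        apply le_min
        · calc min 1 (δ / r₀) * r ≤ 1 * r :=
            mul_le_mul_of_nonneg_right (min_le_left _ _) hr.le
          _ = r := one_mul r
        · calc min 1 (δ / r₀) * r ≤ (δ / r₀) * r :=
            mul_le_mul_of_nonneg_right (min_le_right _ _) hr.le
          _ ≤ (δ / r₀) * r₀ := mul_le_mul_of_nonneg_left hrr₀ (by positivity)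
          _ = δ := by field_simp
      calc c * min 1 (δ / r₀) * r = c * (min 1 (δ / r₀) * r) := by ring
        _ ≤ c * min r δ := mul_le_mul_of_nonneg_left hm hc.le
    · have hm : min 1 (δ / r₀) * r ≤ min r δ := by
        apply le_min
        · calc min 1 (δ / r₀) * r ≤ 1 * r :=
            mul_le_mul_of_nonneg_right (min_le_left _ _) hr.le
          _ = r := one_mul r
        · calc min 1 (δ / r₀) * r ≤ (δ / r₀) * r :=
            mul_le_mul_of_nonneg_right (min_le_right _ _) hr.le
          _ ≤ (δ / r₀) * r₀ := mul_le_mul_of_nonneg_left hrr₀ (by positivity)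
          _ = δ := by field_simp
      calc c * min 1 (δ / r₀) * r = c * (min 1 (δ / r₀) * r) := by ring
        _ ≤ c * min r δ := mul_le_mul_of_nonneg_left hm hc.le
  calc ENNReal.ofReal (c₂ ^ n) * volume (closedBall x r)
      = ENNReal.ofReal (c₂ ^ n) * (ENNReal.ofReal (r ^ n) * volume (ball (0 : EuclideanSpace ℝ (Fin d)) 1)) := by rw [hvol2]
    _ = ENNReal.ofReal (c₂ ^ n * r ^ n) * volume (ball (0 : EuclideanSpace ℝ (Fin d)) 1) := by
        rw [ENNReal.ofReal_mul (by positivity), mul_assoc]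
    _ ≤ ENNReal.ofReal (s ^ n) * volume (ball (0 : EuclideanSpace ℝ (Fin d)) 1) := by
        apply mul_le_mul_left
        apply ENNReal.ofReal_le_ofReal
        calc c₂ ^ n * r ^ n = (c₂ * r) ^ n := (mul_pow _ _ _).symm
          _ ≤ s ^ n := pow_le_pow_left₀ (by positivity) hc₂r n
    _ = volume (closedBall y s) := hvol1.symm
    _ ≤ volume (closedBall x r ∩ D) := measure_mono hsub
end

section
/- Let D ⊂ ℝ^d be a compact convex set with non-empty interior. Then D satisfies the weak uniform interior cone condition: there exist δ > 0 and θ ∈ (0, π/2] such that for every x ∈ D there is a unit vector v_x ∈ ℝ^d with (x + C(v_x)) ∩ B_δ(x) ⊆ D, where C(v_x) = {z : ⟨z, v_x⟩ > |z| cos θ}. -/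
open MeasureTheory Metric Real
open scoped BigOperators ENNReal RealInnerProductSpace

set_option maxHeartbeats 1000000 in
/-- (Lemma: compact convex sets with non-empty interior satisfy the
weak uniform interior cone condition.)  Let `D ⊂ ℝ^d` (with `d ≥ 1`) be a compact
convex set with non-empty interior.  Then there exist `δ > 0` and `θ ∈ (0, π/2]`
such that for every `x ∈ D` there is a unit vector `vx` whose cone
`C(vx) = {z : ⟪z, vx⟫ > ‖z‖ cos θ}` satisfies `(x + C(vx)) ∩ B_δ(x) ⊆ D`. -/
theorem stmt17 {d : ℕ} (hd : 0 < d) (D : Set (EuclideanSpace ℝ (Fin d)))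
    (hDcompact : IsCompact D) (hDconv : Convex ℝ D)
    (hDint : (interior D).Nonempty) :
    ∃ δ θ : ℝ, 0 < δ ∧ θ ∈ Set.Ioc 0 (π / 2) ∧
      ∀ x ∈ D, ∃ vx : EuclideanSpace ℝ (Fin d), ‖vx‖ = 1 ∧
        ∀ z : EuclideanSpace ℝ (Fin d),
          ⟪z, vx⟫ > ‖z‖ * Real.cos θ → ‖z‖ ≤ δ → x + z ∈ D := by
  obtain ⟨c, hc⟩ := hDint
  obtain ⟨r, hr, hball⟩ := Metric.isOpen_iff.mp isOpen_interior c hc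
  set r0 : ℝ := r / 2 with hr0def
  have hr0 : 0 < r0 := by positivity
  have hcb : Metric.closedBall c r0 ⊆ D := by
    intro y hy
    exact interior_subset (hball (lt_of_le_of_lt (Metric.mem_closedBall.mp hy) (by linarith)))
  obtain ⟨R, hR⟩ := hDcompact.isBounded.subset_closedBall c
  set R' : ℝ := max R r0 with hR'def
  have hR' : 0 < R' := lt_of_lt_of_le hr0 (le_max_right _ _)
  set a : ℝ := max 0 (1 - r0 ^ 2 / (2 * R' ^ 2)) with hadef
  have ha0 : 0 ≤ a := le_max_left _ _
  have ha1 : a < 1 := by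
    have h1 : 1 - r0 ^ 2 / (2 * R' ^ 2) < 1 := by
      have : 0 < r0 ^ 2 / (2 * R' ^ 2) := by positivity
      linarith
    exact max_lt one_pos h1
  have key : 2 * (1 - a) * R' ^ 2 ≤ r0 ^ 2 := by
    have h1 : 1 - r0 ^ 2 / (2 * R' ^ 2) ≤ a := le_max_right _ _
    have h2 : r0 ^ 2 / (2 * R' ^ 2) * (2 * R' ^ 2) = r0 ^ 2 := by
      field_simp
    nlinarith [sq_nonneg R']
  refine ⟨r0 / 2, Real.arccos a, by positivity, ⟨Real.arccos_pos.mpr ha1,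
    Real.arccos_le_pi_div_two.mpr ha0⟩, ?_⟩
  have hcos : Real.cos (Real.arccos a) = a :=
    Real.cos_arccos (by linarith) (le_of_lt ha1)
  intro x hx
  by_cases hxc : ‖c - x‖ ≤ r0 / 2
  · -- near case: any unit vector works
    refine ⟨EuclideanSpace.single (⟨0, hd⟩ : Fin d) (1 : ℝ), by simp, ?_⟩
    intro z _ hz
    apply hcb
    rw [Metric.mem_closedBall, dist_eq_norm]
    have : x + z - c = z - (c - x) := by abel
    rw [this]
    calc ‖z - (c - x)‖ ≤ ‖z‖ + ‖c - x‖ := norm_sub_le _ _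
      _ ≤ r0 := by linarith
  · push_neg at hxc
    have hs : 0 < ‖c - x‖ := by linarith
    have hcx : c - x ≠ 0 := by
      intro h; rw [h, norm_zero] at hs; exact lt_irrefl 0 hs
    set s : ℝ := ‖c - x‖ with hsdef
    have hsR : s ≤ R' := by
      have := hR hx
      rw [Metric.mem_closedBall, dist_eq_norm] at this
      calc s = ‖x - c‖ := by rw [norm_sub_rev]
        _ ≤ R := this
        _ ≤ R' := le_max_left _ _
    refine ⟨s⁻¹ • (c - x), norm_smul_inv_norm hcx, ?_⟩
    intro z hzin hzn
    rw [hcos] at hzin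
    rw [real_inner_smul_right] at hzin
    set n : ℝ := ‖z‖ with hndef
    set ip : ℝ := ⟪z, c - x⟫ with hipdef
    have hcs : ip ≤ n * s := by
      rw [hipdef, hndef, hsdef]; exact real_inner_le_norm z (c - x)
    have hle : s⁻¹ * ip ≤ n := by
      calc s⁻¹ * ip ≤ s⁻¹ * (n * s) :=
            mul_le_mul_of_nonneg_left hcs (le_of_lt (inv_pos.mpr hs))
        _ = n := by field_simp
    have hn : 0 < n := by
      have h0 : 0 ≤ n := by rw [hndef]; exact norm_nonneg z
      nlinarith
    have hip : n * a * s < ip := by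
      have h2 : n * a < ip / s := by rw [div_eq_inv_mul]; exact hzin
      exact (lt_div_iff₀ hs).mp h2
    set t : ℝ := n / s with htdef
    have ht : 0 < t := div_pos hn hs
    have hts : t * s = n := div_mul_cancel₀ n (ne_of_gt hs)
    have ht1 : t ≤ 1 := by
      rw [div_le_one hs]; linarith
    set w : EuclideanSpace ℝ (Fin d) := z - t • (c - x) with hwdef
    have hwsq : ‖w‖ ^ 2 = n ^ 2 - 2 * t * ip + t ^ 2 * s ^ 2 := by
      rw [hwdef, norm_sub_sq_real, real_inner_smul_right, norm_smul, Real.norm_eq_abs,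
        abs_of_pos ht, mul_pow, ← hipdef, ← hndef, ← hsdef]
      ring
    have hwlt : ‖w‖ ^ 2 < (t * r0) ^ 2 := by
      rw [hwsq]
      have h1 : t ^ 2 * s ^ 2 = n ^ 2 := by
        have : (t * s) ^ 2 = n ^ 2 := by rw [hts]
        nlinarith [this]
      have h2 : 2 * (1 - a) * s ^ 2 ≤ r0 ^ 2 := by
        have hss : s ^ 2 ≤ R' ^ 2 := pow_le_pow_left₀ (le_of_lt hs) hsR 2
        have h3 : 2 * (1 - a) * s ^ 2 ≤ 2 * (1 - a) * R' ^ 2 :=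
          mul_le_mul_of_nonneg_left hss (by linarith)
        linarith
      have e2 : 2 * t * (n * a * s) < 2 * t * ip :=
        mul_lt_mul_of_pos_left hip (by linarith)
      have e3 : 2 * t * (n * a * s) = 2 * a * n ^ 2 := by
        have : 2 * t * (n * a * s) = 2 * a * n * (t * s) := by ring
        rw [this, hts]; ring
      have e4 : 2 * (1 - a) * n ^ 2 ≤ t ^ 2 * r0 ^ 2 := by
        calc 2 * (1 - a) * n ^ 2 = t ^ 2 * (2 * (1 - a) * s ^ 2) := by
              rw [← h1]; ring
          _ ≤ t ^ 2 * r0 ^ 2 := mul_le_mul_of_nonneg_left h2 (sq_nonneg t)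
      have e5 : (t * r0) ^ 2 = t ^ 2 * r0 ^ 2 := by ring
      rw [e5]
      linarith
    have hwn : ‖w‖ ≤ t * r0 :=
      le_of_lt (lt_of_pow_lt_pow_left₀ 2 (by positivity) hwlt)
    have hy : c + t⁻¹ • w ∈ D := by
      apply hcb
      rw [Metric.mem_closedBall, dist_eq_norm]
      have h6 : c + t⁻¹ • w - c = t⁻¹ • w := by abel
      rw [h6, norm_smul, Real.norm_eq_abs, abs_of_pos (inv_pos.mpr ht)]
      calc t⁻¹ * ‖w‖ ≤ t⁻¹ * (t * r0) :=
        mul_le_mul_of_nonneg_left hwn (le_of_lt (inv_pos.mpr ht))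
        _ = r0 := by field_simp
    have hmem := hDconv hx hy (by linarith : (0:ℝ) ≤ 1 - t) (le_of_lt ht) (by ring)
    have heq : (1 - t) • x + t • (c + t⁻¹ • w) = x + z := by
      rw [hwdef, smul_add, smul_smul, mul_inv_cancel₀ (ne_of_gt ht), one_smul]
      module
    rwa [heq] at hmem
end
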